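/- arXiv:2207.04036 — 4 statements merged into one kernel-verified Lean document; each statement's English description precedes it below -/
import Mathlib

section
/- Consider the parametrization G : ℝ² → ℝ² given by G_{11}(u) = u_1² and G_{12}(u) = u_1 u_2 (the d = 2, r = 1 case of matrix factorization G(U) = UUᵀ). Then the Lie bracket [∇G_{11}, ∇G_{12}](u) = (−u_2, u_1)ᵀ, which is nonzero whenever u ≠ 0. In particular, G is not a commuting parametrization on any open subset of ℝ² \ {0}. -/
/-- Lie bracket of two vector fields: `[X,Y](x) = ∂Y(x) X(x) - ∂X(x) Y(x)`. -/
noncomputable def lieBracket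
    (X Y : EuclideanSpace ℝ (Fin 2) → EuclideanSpace ℝ (Fin 2))
    (x : EuclideanSpace ℝ (Fin 2)) : EuclideanSpace ℝ (Fin 2) :=
  fderiv ℝ Y x (X x) - fderiv ℝ X x (Y x)

noncomputable section

abbrev E := EuclideanSpace ℝ (Fin 2)

noncomputable def A : E →L[ℝ] E :=
  (EuclideanSpace.equiv (Fin 2) ℝ).symm.toContinuousLinearMap.comp
    (ContinuousLinearMap.pi ![EuclideanSpace.proj 1, EuclideanSpace.proj 0])

noncomputable def B : E →L[ℝ] E :=
  (EuclideanSpace.equiv (Fin 2) ℝ).symm.toContinuousLinearMap.comp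
    (ContinuousLinearMap.pi ![(2:ℝ) • EuclideanSpace.proj 0, 0])

lemma A_apply (v : E) : A v = ![v 1, v 0] := by
  funext i; fin_cases i <;> simp [A]

lemma B_apply (v : E) : B v = ![2 * v 0, 0] := by
  funext i; fin_cases i <;> simp [B]

lemma grad1 (G11 : E → ℝ) (hG11 : ∀ u : E, G11 u = (u 0) ^ 2) (u : E) :
    gradient G11 u = B u := by
  have h : HasGradientAt G11 (B u) u := by
    rw [hasGradientAt_iff_hasFDerivAt]
    have h1 : HasFDerivAt G11 ((u 0) • (EuclideanSpace.proj (𝕜 := ℝ) (0:Fin 2))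
        + (u 0) • (EuclideanSpace.proj (𝕜 := ℝ) (0:Fin 2))) u := by
      have := ((EuclideanSpace.proj (𝕜 := ℝ) (0 : Fin 2)).hasFDerivAt (x := u)).mul
        ((EuclideanSpace.proj (𝕜 := ℝ) (0 : Fin 2)).hasFDerivAt (x := u))
      refine this.congr_of_eventuallyEq
        (Filter.Eventually.of_forall fun v => ?_)
      simp [hG11, sq]
    refine h1.congr_fderiv ?_
    ext v
    simp [InnerProductSpace.toDual_apply_apply, PiLp.inner_apply, Fin.sum_univ_two, B_apply]
    ring
  exact h.gradient

lemma grad2 (G12 : E → ℝ) (hG12 : ∀ u : E, G12 u = u 0 * u 1) (u : E) :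
    gradient G12 u = A u := by
  have h : HasGradientAt G12 (A u) u := by
    rw [hasGradientAt_iff_hasFDerivAt]
    have h1 : HasFDerivAt G12 ((u 0) • (EuclideanSpace.proj (𝕜 := ℝ) (1:Fin 2))
        + (u 1) • (EuclideanSpace.proj (𝕜 := ℝ) (0:Fin 2))) u := by
      have := ((EuclideanSpace.proj (𝕜 := ℝ) (0 : Fin 2)).hasFDerivAt (x := u)).mul
        ((EuclideanSpace.proj (𝕜 := ℝ) (1 : Fin 2)).hasFDerivAt (x := u))
      refine this.congr_of_eventuallyEq (Filter.Eventually.of_forall fun v => ?_)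
      simp [hG12]
    refine h1.congr_fderiv ?_
    ext v
    simp [InnerProductSpace.toDual_apply_apply, PiLp.inner_apply, Fin.sum_univ_two, A_apply]
    ring
  exact h.gradient

end

/-- For `G₁₁(u) = u₁²` and `G₁₂(u) = u₁u₂` (matrix factorization `UUᵀ` with `d = 2, r = 1`),
the Lie bracket `[∇G₁₁, ∇G₁₂](u)` is a nonzero positive multiple of `(-u₂, u₁)ᵀ`, nonzero
whenever `u ≠ 0`; in particular `G` is not commuting on any open subset of `ℝ² \ {0}`. -/
theorem stmt3 (G11 G12 : EuclideanSpace ℝ (Fin 2) → ℝ)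
    (hG11 : ∀ u : EuclideanSpace ℝ (Fin 2), G11 u = (u 0) ^ 2)
    (hG12 : ∀ u : EuclideanSpace ℝ (Fin 2), G12 u = u 0 * u 1) :
    (∀ u : EuclideanSpace ℝ (Fin 2),
        lieBracket (gradient G11) (gradient G12) u = (2 : ℝ) • ![-(u 1), u 0]) ∧
    (∀ u : EuclideanSpace ℝ (Fin 2), u ≠ 0 →
        lieBracket (gradient G11) (gradient G12) u ≠ 0) ∧
    (∀ U : Set (EuclideanSpace ℝ (Fin 2)), IsOpen U → U.Nonempty → (0 : EuclideanSpace ℝ (Fin 2)) ∉ U →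
        ¬ ∀ u ∈ U, lieBracket (gradient G11) (gradient G12) u = 0) := by
  have h1 : gradient G11 = fun u => B u := funext (grad1 G11 hG11)
  have h2 : gradient G12 = fun u => A u := funext (grad2 G12 hG12)
  have key : ∀ u : E, lieBracket (gradient G11) (gradient G12) u = (2 : ℝ) • ![-(u 1), u 0] := by
    intro u
    unfold lieBracket
    rw [h1, h2]
    rw [show (fun u => A u) = ⇑A from rfl, show (fun u => B u) = ⇑B from rfl,
      A.fderiv, B.fderiv]
    funext i
    fin_cases i <;>
      simp [A_apply, B_apply]
  have nz : ∀ u : E, u ≠ 0 → lieBracket (gradient G11) (gradient G12) u ≠ 0 := by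
    intro u hu h0
    have h0 := congrArg WithLp.ofLp h0
    rw [key u] at h0
    apply hu
    ext i
    have h0' := congrFun h0
    fin_cases i
    · simpa using h0' 1
    · simpa using h0' 0
  refine ⟨key, nz, ?_⟩
  rintro U hU ⟨u, huU⟩ h0U hall
  have hu : u ≠ 0 := fun h => h0U (h ▸ huU)
  exact nz u hu (hall u huU)
end

section
/- With G_{11}(u) = u_1² and G_{12}(u) = u_1 u_2 on ℝ², the iterated Lie bracket satisfies ⟨[∇G_{11}, [∇G_{11}, ∇G_{12}]](u), ∇G_{12}(u)⟩ = u_1² + u_2² for all u ∈ ℝ². In particular this inner product is strictly positive on every open subset of ℝ², so the iterated Lie bracket of gradients of G is not orthogonal to the span of the gradients of G. -/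
open scoped RealInnerProductSpace
noncomputable section Aux

local notation "E" => EuclideanSpace ℝ (Fin 2)

private def e0 : E := EuclideanSpace.single 0 1
private def e1 : E := EuclideanSpace.single 1 1

private def P0 : E →L[ℝ] ℝ := EuclideanSpace.proj (0 : Fin 2)
private def P1 : E →L[ℝ] ℝ := EuclideanSpace.proj (1 : Fin 2)

private def L1 : E →L[ℝ] E := (2:ℝ) • P0.smulRight e0
private def L2 : E →L[ℝ] E := P1.smulRight e0 + P0.smulRight e1

private lemma toDual_eq (w : E) (D : E →L[ℝ] ℝ) (h : ∀ v : E, ⟪w, v⟫ = D v) :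
    (InnerProductSpace.toDual ℝ E) w = D := by
  ext v; simpa using h v

private lemma inner_e0 (v : E) : ⟪e0, v⟫ = v 0 := by
  simp [e0, EuclideanSpace.inner_single_left]
private lemma inner_e1 (v : E) : ⟪e1, v⟫ = v 1 := by
  simp [e1, EuclideanSpace.inner_single_left]

private lemma grad11 (G11 : E → ℝ) (hG11 : ∀ u : E, G11 u = (u 0) ^ 2) :
    gradient G11 = ⇑L1 := by
  apply gradient_eq
  intro u
  rw [hasGradientAt_iff_hasFDerivAt]
  have h : HasFDerivAt (fun v : E => v 0 * v 0) (u 0 • P0 + u 0 • P0) u :=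
    (P0.hasFDerivAt (x := u)).mul (P0.hasFDerivAt (x := u))
  have h2 : HasFDerivAt G11 (u 0 • P0 + u 0 • P0) u := by
    apply h.congr_of_eventuallyEq
    filter_upwards with v
    rw [hG11 v]; ring
  refine h2.congr_fderiv (Eq.symm ?_)
  apply toDual_eq
  intro v
  simp [L1, inner_smul_left, inner_add_left, inner_e0, P0, e0, EuclideanSpace.single_apply,
    EuclideanSpace.inner_single_left]
  ring

private lemma grad12 (G12 : E → ℝ) (hG12 : ∀ u : E, G12 u = u 0 * u 1) :
    gradient G12 = ⇑L2 := by
  apply gradient_eq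
  intro u
  rw [hasGradientAt_iff_hasFDerivAt]
  have h : HasFDerivAt (fun v : E => v 0 * v 1) (u 0 • P1 + u 1 • P0) u :=
    (P0.hasFDerivAt (x := u)).mul (P1.hasFDerivAt (x := u))
  have h2 : HasFDerivAt G12 (u 0 • P1 + u 1 • P0) u := by
    apply h.congr_of_eventuallyEq
    filter_upwards with v
    rw [hG12 v]
  refine h2.congr_fderiv (Eq.symm ?_)
  apply toDual_eq
  intro v
  simp [L2, inner_smul_left, inner_add_left, inner_e0, inner_e1, P0, P1, e0, e1,
    EuclideanSpace.single_apply, EuclideanSpace.inner_single_left]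
  ring

private lemma lieB (A B : E →L[ℝ] E) : lieBracket ⇑A ⇑B = ⇑(B.comp A - A.comp B) := by
  funext u
  simp [lieBracket, ContinuousLinearMap.fderiv]

private def L3 : E →L[ℝ] E := L2.comp L1 - L1.comp L2

private lemma key (u : E) :
    ⟪((L3.comp L1 - L1.comp L3)) u, L2 u⟫ = 4 * ((u 0)^2 + (u 1)^2) := by
  simp [PiLp.inner_apply, Fin.sum_univ_two, L3, L1, L2, e0, e1, P0, P1,
    EuclideanSpace.single_apply]
  ring

end Aux

/-- For `G₁₁(u) = u₁²`, `G₁₂(u) = u₁u₂`, the iterated Lie bracket pairs with `∇G₁₂` as a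
positive multiple of `u₁² + u₂²` (equal to `u₁² + u₂²` up to normalization); in particular the
pairing is strictly positive at every `u ≠ 0`, so the iterated Lie bracket is not orthogonal
to the span of the gradients of `G` on any open set. -/
theorem stmt4 (G11 G12 : EuclideanSpace ℝ (Fin 2) → ℝ)
    (hG11 : ∀ u : EuclideanSpace ℝ (Fin 2), G11 u = (u 0) ^ 2)
    (hG12 : ∀ u : EuclideanSpace ℝ (Fin 2), G12 u = u 0 * u 1) :
    (∃ c : ℝ, 0 < c ∧ ∀ u : EuclideanSpace ℝ (Fin 2),
        ⟪lieBracket (gradient G11) (lieBracket (gradient G11) (gradient G12)) u,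
          gradient G12 u⟫ = c * ((u 0) ^ 2 + (u 1) ^ 2)) ∧
    (∀ u : EuclideanSpace ℝ (Fin 2), u ≠ 0 →
        0 < ⟪lieBracket (gradient G11) (lieBracket (gradient G11) (gradient G12)) u,
          gradient G12 u⟫) := by
  have hval : ∀ u : EuclideanSpace ℝ (Fin 2),
      ⟪lieBracket (gradient G11) (lieBracket (gradient G11) (gradient G12)) u,
        gradient G12 u⟫ = 4 * ((u 0) ^ 2 + (u 1) ^ 2) := by
    intro u
    rw [grad11 G11 hG11, grad12 G12 hG12, lieB, lieB]
    exact key u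
  refine ⟨⟨4, by norm_num, hval⟩, ?_⟩
  intro u hu
  rw [hval u]
  have h01 : u 0 ≠ 0 ∨ u 1 ≠ 0 := by
    by_contra h
    push_neg at h
    exact hu (by ext i; fin_cases i <;> simp [h.1, h.2])
  rcases h01 with h | h
  · have : 0 < (u 0) ^ 2 := by positivity
    nlinarith [sq_nonneg (u 1)]
  · have : 0 < (u 1) ^ 2 := by positivity
    nlinarith [sq_nonneg (u 0)]
end

section
/- Let A_1, ..., A_d ∈ ℝ^{D×D} be pairwise commuting symmetric matrices and x₀ ∈ ℝ^D such that the vectors A_1 x₀, ..., A_d x₀ are linearly independent. Define Q : ℝ^d → ℝ by Q(μ) = (1/4) ‖exp(Σ_{i=1}^d μ_i A_i) x₀‖². Then the Hessian of Q at every μ ∈ ℝ^d is positive definite; in particular Q is strictly convex on ℝ^d. -/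
open Matrix NormedSpace

namespace Stmt8Aux

attribute [local instance] Matrix.linftyOpNormedRing Matrix.linftyOpNormedAlgebra

variable {D : ℕ}

noncomputable def mulVecCLM (x₀ : Fin D → ℝ) : Matrix (Fin D) (Fin D) ℝ →L[ℝ] (Fin D → ℝ) :=
  LinearMap.toContinuousLinearMap
    { toFun := fun B => B.mulVec x₀
      map_add' := fun B C => Matrix.add_mulVec B C x₀
      map_smul' := fun c B => Matrix.smul_mulVec c B x₀ }

@[simp] lemma mulVecCLM_apply (x₀ : Fin D → ℝ) (B : Matrix (Fin D) (Fin D) ℝ) :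
    mulVecCLM x₀ B = B.mulVec x₀ := rfl

noncomputable def mulVecCLM2 (N : Matrix (Fin D) (Fin D) ℝ) (x₀ : Fin D → ℝ) :
    Matrix (Fin D) (Fin D) ℝ →L[ℝ] (Fin D → ℝ) :=
  LinearMap.toContinuousLinearMap
    { toFun := fun B => (B * N).mulVec x₀
      map_add' := fun B C => by
        show ((B + C) * N) *ᵥ x₀ = (B * N) *ᵥ x₀ + (C * N) *ᵥ x₀
        rw [add_mul, Matrix.add_mulVec]
      map_smul' := fun c B => by
        show ((c • B) * N) *ᵥ x₀ = c • ((B * N) *ᵥ x₀)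
        rw [smul_mul_assoc, Matrix.smul_mulVec] }

@[simp] lemma mulVecCLM2_apply (N : Matrix (Fin D) (Fin D) ℝ) (x₀ : Fin D → ℝ)
    (B : Matrix (Fin D) (Fin D) ℝ) : mulVecCLM2 N x₀ B = (B * N).mulVec x₀ := rfl

theorem hasDerivAt_dot {u v : ℝ → Fin D → ℝ} {u' v' : Fin D → ℝ} {t : ℝ}
    (hu : HasDerivAt u u' t) (hv : HasDerivAt v v' t) :
    HasDerivAt (fun s => u s ⬝ᵥ v s) (u' ⬝ᵥ v t + u t ⬝ᵥ v') t := by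
  simp only [dotProduct]
  rw [← Finset.sum_add_distrib]
  exact HasDerivAt.fun_sum fun i _ => ((hasDerivAt_pi.1 hu i).mul (hasDerivAt_pi.1 hv i))

theorem hasDerivAt_E (M N : Matrix (Fin D) (Fin D) ℝ) (hMN : Commute M N) (t : ℝ) :
    HasDerivAt (fun s : ℝ => exp (M + s • N)) (exp (M + t • N) * N) t := by
  have hfun : (fun s : ℝ => exp (M + s • N)) = fun s => exp M * exp (s • N) := by
    funext s; exact exp_add_of_commute (hMN.smul_right s)
  rw [hfun, show exp (M + t • N) * N = exp M * (exp (t • N) * N) by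
    rw [← mul_assoc]; exact congrArg (· * N) (exp_add_of_commute (hMN.smul_right t))]
  exact (hasDerivAt_exp_smul_const N t).const_mul (exp M)

variable (M N : Matrix (Fin D) (Fin D) ℝ) (x₀ : Fin D → ℝ)

noncomputable def uu (t : ℝ) : Fin D → ℝ := (exp (M + t • N)).mulVec x₀

noncomputable def gg (t : ℝ) : ℝ := (1/4) * (uu M N x₀ t ⬝ᵥ uu M N x₀ t)

noncomputable def ww (t : ℝ) : Fin D → ℝ := (exp (M + t • N) * N).mulVec x₀

noncomputable def gg1 (t : ℝ) : ℝ := (1/2) * (ww M N x₀ t ⬝ᵥ uu M N x₀ t)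

noncomputable def gg2 (t : ℝ) : ℝ := ww M N x₀ t ⬝ᵥ ww M N x₀ t

theorem hasDerivAt_uu (hMN : Commute M N) (t : ℝ) :
    HasDerivAt (uu M N x₀) (ww M N x₀ t) t := by
  have h := (mulVecCLM x₀).hasFDerivAt.comp_hasDerivAt t (hasDerivAt_E M N hMN t)
  exact h

theorem hasDerivAt_ww (hMN : Commute M N) (t : ℝ) :
    HasDerivAt (ww M N x₀) ((exp (M + t • N) * N * N).mulVec x₀) t := by
  have h := (mulVecCLM2 N x₀).hasFDerivAt.comp_hasDerivAt t (hasDerivAt_E M N hMN t)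
  exact h

theorem hasDerivAt_gg (hMN : Commute M N) (t : ℝ) :
    HasDerivAt (gg M N x₀) (gg1 M N x₀ t) t := by
  have h : HasDerivAt (gg M N x₀)
      (1/4 * (ww M N x₀ t ⬝ᵥ uu M N x₀ t + uu M N x₀ t ⬝ᵥ ww M N x₀ t)) t :=
    (hasDerivAt_dot (hasDerivAt_uu M N x₀ hMN t) (hasDerivAt_uu M N x₀ hMN t)).const_mul
    (1/4 : ℝ)
  convert h using 1
  show (1/2) * (ww M N x₀ t ⬝ᵥ uu M N x₀ t) = _
  rw [dotProduct_comm (uu M N x₀ t) (ww M N x₀ t)]; ring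

theorem key_dot (P R : Matrix (Fin D) (Fin D) ℝ) :
    P.mulVec x₀ ⬝ᵥ R.mulVec x₀ = x₀ ⬝ᵥ ((Pᵀ * R).mulVec x₀) := by
  rw [Matrix.dotProduct_mulVec (P.mulVec x₀) R x₀, Matrix.dotProduct_mulVec x₀ (Pᵀ * R) x₀,
    ← Matrix.vecMul_vecMul, Matrix.vecMul_transpose]

theorem term_eq (hMN : Commute M N) (hM : M.IsSymm) (hN : N.IsSymm) (t : ℝ) :
    (exp (M + t • N) * N * N).mulVec x₀ ⬝ᵥ uu M N x₀ t = gg2 M N x₀ t := by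
  set C := exp (M + t • N) with hCdef
  have hMtN : (M + t • N).IsSymm := hM.add (hN.smul t)
  have hC : Cᵀ = C := hMtN.exp
  have hcomm' : Commute (M + t • N) N := (hMN.symm.add_right ((Commute.refl N).smul_right t)).symm
  have hcCN : Commute C N := hcomm'.exp_left
  have hCCN : C * C * N = N * (C * C) := (hcCN.mul_left hcCN).eq
  show (C * N * N).mulVec x₀ ⬝ᵥ C.mulVec x₀ = (C * N).mulVec x₀ ⬝ᵥ (C * N).mulVec x₀
  rw [key_dot, key_dot]
  have hN' : Nᵀ = N := hN
  have hmat : (C * N * N)ᵀ * C = (C * N)ᵀ * (C * N) := by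
    simp only [Matrix.transpose_mul, hC, hN']
    simp only [mul_assoc]
    rw [← mul_assoc C C N, hCCN]
  rw [hmat]

theorem hasDerivAt_gg1 (hMN : Commute M N) (hM : M.IsSymm) (hN : N.IsSymm) (t : ℝ) :
    HasDerivAt (gg1 M N x₀) (gg2 M N x₀ t) t := by
  have h : HasDerivAt (gg1 M N x₀) (1/2 * ((exp (M + t • N) * N * N).mulVec x₀ ⬝ᵥ uu M N x₀ t +
      ww M N x₀ t ⬝ᵥ ww M N x₀ t)) t := (hasDerivAt_dot (hasDerivAt_ww M N x₀ hMN t)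
    (hasDerivAt_uu M N x₀ hMN t)).const_mul (1/2 : ℝ)
  convert h using 1
  rw [term_eq M N x₀ hMN hM hN t]
  show gg2 M N x₀ t = 1/2 * (gg2 M N x₀ t + gg2 M N x₀ t)
  ring

theorem gg2_pos (hy : N.mulVec x₀ ≠ 0) (t : ℝ) : 0 < gg2 M N x₀ t := by
  have hz : ww M N x₀ t ≠ 0 := by
    have heq : ww M N x₀ t = (exp (M + t • N)).mulVec (N.mulVec x₀) := by
      rw [Matrix.mulVec_mulVec]; rfl
    rw [heq]
    intro h
    apply hy
    have hinj := Matrix.mulVec_injective_iff_isUnit.2 (Matrix.isUnit_exp (M + t • N))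
    exact hinj (by simpa using h)
  obtain ⟨i, hi⟩ := Function.ne_iff.1 hz
  refine Finset.sum_pos' (fun j _ => mul_self_nonneg _)
    ⟨i, Finset.mem_univ i, mul_self_pos.2 (by simpa using hi)⟩

theorem strictConvexOn_gg (hMN : Commute M N) (hM : M.IsSymm) (hN : N.IsSymm)
    (hy : N.mulVec x₀ ≠ 0) : StrictConvexOn ℝ Set.univ (gg M N x₀) := by
  have hd : ∀ t, HasDerivAt (gg M N x₀) (gg1 M N x₀ t) t := hasDerivAt_gg M N x₀ hMN
  have hderiv : deriv (gg M N x₀) = gg1 M N x₀ := funext fun s => (hd s).deriv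
  refine strictConvexOn_of_deriv2_pos convex_univ
    (Differentiable.continuous fun t => (hd t).differentiableAt).continuousOn fun t _ => ?_
  have h2 : deriv^[2] (gg M N x₀) t = gg2 M N x₀ t := by
    show deriv (deriv (gg M N x₀)) t = _
    rw [hderiv, (hasDerivAt_gg1 M N x₀ hMN hM hN t).deriv]
  rw [h2]
  exact gg2_pos M N x₀ hy t

theorem contDiff_Q {d : ℕ} (A : Fin d → Matrix (Fin D) (Fin D) ℝ) (x₀ : Fin D → ℝ)
    (Q : EuclideanSpace ℝ (Fin d) → ℝ)
    (hQ : ∀ μ : EuclideanSpace ℝ (Fin d),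
      Q μ = (1 / 4) * ((exp (∑ i, μ i • A i)).mulVec x₀ ⬝ᵥ
        (exp (∑ i, μ i • A i)).mulVec x₀)) :
    ContDiff ℝ 2 Q := by
  have hexp : ContDiff ℝ 2 (exp : Matrix (Fin D) (Fin D) ℝ → Matrix (Fin D) (Fin D) ℝ) :=
    contDiff_iff_contDiffAt.2 fun x => (exp_analytic (𝕂 := ℝ) x).contDiffAt
  let Sclm : EuclideanSpace ℝ (Fin d) →L[ℝ] Matrix (Fin D) (Fin D) ℝ :=
    LinearMap.toContinuousLinearMap
      { toFun := fun μ => ∑ i, μ i • A i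
        map_add' := by
          intro x y
          simp only [show ∀ i, (x + y) i = x i + y i from fun i => rfl, add_smul,
            Finset.sum_add_distrib]
        map_smul' := by
          intro c x
          simp only [show ∀ i, (c • x) i = c * x i from fun i => rfl, RingHom.id_apply,
            Finset.smul_sum, smul_smul] }
  set f : EuclideanSpace ℝ (Fin d) → Fin D → ℝ := fun μ => mulVecCLM x₀ (exp (Sclm μ)) with hfdef
  have hf : ContDiff ℝ 2 f := (mulVecCLM x₀).contDiff.comp (hexp.comp Sclm.contDiff)
  have hdot : ContDiff ℝ 2 (fun μ => f μ ⬝ᵥ f μ) := by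
    simp only [dotProduct]
    apply ContDiff.sum
    intro i _
    exact (((ContinuousLinearMap.proj (R := ℝ) (φ := fun _ : Fin D => ℝ) i).contDiff.comp hf)).mul
      (((ContinuousLinearMap.proj (R := ℝ) (φ := fun _ : Fin D => ℝ) i).contDiff.comp hf))
  have hQeq : Q = fun μ => (1/4) * (f μ ⬝ᵥ f μ) := funext fun μ => by rw [hQ μ]; rfl
  rw [hQeq]
  exact contDiff_const.mul hdot

end Stmt8Aux

/-- For pairwise commuting symmetric `A_i` with `A_1 x₀, ..., A_d x₀` linearly independent,
`Q(μ) = (1/4)‖exp(Σ μ_i A_i) x₀‖²` has everywhere positive definite Hessian and is strictly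
convex on `ℝ^d`. -/
theorem stmt8 {D d : ℕ} (A : Fin d → Matrix (Fin D) (Fin D) ℝ)
    (hsymm : ∀ i, (A i).IsSymm)
    (hcomm : ∀ i j, A i * A j = A j * A i)
    (x₀ : Fin D → ℝ)
    (hindep : LinearIndependent ℝ (fun i => (A i).mulVec x₀))
    (Q : EuclideanSpace ℝ (Fin d) → ℝ)
    (hQ : ∀ μ : EuclideanSpace ℝ (Fin d),
      Q μ = (1 / 4) * ((NormedSpace.exp (∑ i, μ i • A i)).mulVec x₀ ⬝ᵥ
        (NormedSpace.exp (∑ i, μ i • A i)).mulVec x₀)) :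
    (∀ (μ : EuclideanSpace ℝ (Fin d)) (v : EuclideanSpace ℝ (Fin d)), v ≠ 0 →
        0 < fderiv ℝ (fderiv ℝ Q) μ v v) ∧
    StrictConvexOn ℝ Set.univ Q := by
  classical
  set S : EuclideanSpace ℝ (Fin d) → Matrix (Fin D) (Fin D) ℝ := fun μ => ∑ i, μ i • A i
    with hSdef
  have hS_add : ∀ (μ v : EuclideanSpace ℝ (Fin d)) (s : ℝ), S (μ + s • v) = S μ + s • S v := by
    intro μ v s
    simp only [hSdef]
    rw [Finset.smul_sum, ← Finset.sum_add_distrib]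
    refine Finset.sum_congr rfl fun i _ => ?_
    have h1 : (μ + s • v) i = μ i + s * v i := rfl
    rw [h1, add_smul, smul_smul]
  have hcommS : ∀ μ v, Commute (S μ) (S v) := by
    intro μ v
    refine Commute.sum_left _ _ _ fun i _ => ?_
    refine Commute.sum_right _ _ _ fun j _ => ?_
    exact ((show Commute (A i) (A j) from hcomm i j).smul_left _).smul_right _
  have hsymmS : ∀ μ, (S μ).IsSymm := by
    intro μ
    show (∑ i, μ i • A i)ᵀ = ∑ i, μ i • A i
    rw [Matrix.transpose_sum]
    exact Finset.sum_congr rfl fun i _ => by rw [Matrix.transpose_smul, hsymm i]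
  have hy : ∀ v : EuclideanSpace ℝ (Fin d), v ≠ 0 → (S v).mulVec x₀ ≠ 0 := by
    intro v hv h0
    apply hv
    have hexp : (S v).mulVec x₀ = ∑ i, v i • (A i).mulVec x₀ := by
      calc (S v).mulVec x₀ = Stmt8Aux.mulVecCLM x₀ (∑ i, v i • A i) := rfl
        _ = ∑ i, v i • (A i).mulVec x₀ := by rw [map_sum]; simp
    have hz := Fintype.linearIndependent_iff.1 hindep (fun i => v i) (by rw [← hexp]; exact h0)
    ext i
    exact hz i
  have hQcd : ContDiff ℝ 2 Q := Stmt8Aux.contDiff_Q A x₀ Q hQ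
  have hline : ∀ (μ v : EuclideanSpace ℝ (Fin d)) (s : ℝ),
      HasDerivAt (fun r : ℝ => μ + r • v) v s := by
    intro μ v s
    simpa using ((hasDerivAt_id s).smul_const v).const_add μ
  have hcompQ : ∀ (μ v : EuclideanSpace ℝ (Fin d)),
      (fun r : ℝ => Q (μ + r • v)) = Stmt8Aux.gg (S μ) (S v) x₀ := by
    intro μ v
    funext r
    rw [hQ]
    show _ = (1/4) * (Stmt8Aux.uu (S μ) (S v) x₀ r ⬝ᵥ Stmt8Aux.uu (S μ) (S v) x₀ r)
    rw [Stmt8Aux.uu, ← hS_add μ v r]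
  have hg1_eq : ∀ (μ v : EuclideanSpace ℝ (Fin d)) (s : ℝ),
      Stmt8Aux.gg1 (S μ) (S v) x₀ s = fderiv ℝ Q (μ + s • v) v := by
    intro μ v s
    have hQd : HasFDerivAt Q (fderiv ℝ Q (μ + s • v)) (μ + s • v) :=
      ((hQcd.differentiable (by norm_num)) _).hasFDerivAt
    have h1 : HasDerivAt (fun r : ℝ => Q (μ + r • v)) (fderiv ℝ Q (μ + s • v) v) s :=
      hQd.comp_hasDerivAt s (hline μ v s)
    have h2 : HasDerivAt (fun r : ℝ => Q (μ + r • v)) (Stmt8Aux.gg1 (S μ) (S v) x₀ s) s := by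
      rw [hcompQ μ v]; exact Stmt8Aux.hasDerivAt_gg _ _ _ (hcommS μ v) s
    exact h2.unique h1
  constructor
  · intro μ v hv
    set φ := fderiv ℝ Q with hφdef
    have hφcd : ContDiff ℝ 1 φ := hQcd.fderiv_right (by norm_num)
    have h0 : μ + (0:ℝ) • v = μ := by simp
    have hφd : HasFDerivAt φ (fderiv ℝ φ μ) (μ + (0:ℝ) • v) := by
      rw [h0]; exact ((hφcd.differentiable one_ne_zero) μ).hasFDerivAt
    have hc : HasDerivAt (fun s : ℝ => φ (μ + s • v)) (fderiv ℝ φ μ v) 0 :=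
      hφd.comp_hasDerivAt 0 (hline μ v 0)
    have happ : HasDerivAt (fun s : ℝ => φ (μ + s • v) v) (fderiv ℝ φ μ v v) 0 := by
      simpa using hc.clm_apply (hasDerivAt_const 0 v)
    have hfun_eq : (fun s : ℝ => φ (μ + s • v) v) = Stmt8Aux.gg1 (S μ) (S v) x₀ := by
      funext s; exact (hg1_eq μ v s).symm
    rw [hfun_eq] at happ
    have hval := happ.unique
      (Stmt8Aux.hasDerivAt_gg1 _ _ _ (hcommS μ v) (hsymmS μ) (hsymmS v) 0)
    rw [hval]
    exact Stmt8Aux.gg2_pos _ _ _ (hy v hv) 0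
  · refine ⟨convex_univ, ?_⟩
    intro x _ y _ hxy a b ha hb hab
    set v := y - x with hvdef
    have hv : v ≠ 0 := sub_ne_zero.2 (Ne.symm hxy)
    have hsc := Stmt8Aux.strictConvexOn_gg (S x) (S v) x₀ (hcommS x v) (hsymmS x) (hsymmS v)
      (hy v hv)
    have hc := hcompQ x v
    have e0 : Q x = Stmt8Aux.gg (S x) (S v) x₀ 0 := by
      have := congrFun hc 0
      simpa using this
    have e1 : Q y = Stmt8Aux.gg (S x) (S v) x₀ 1 := by
      have := congrFun hc 1
      simpa [hvdef] using this
    have eb : Q (a • x + b • y) = Stmt8Aux.gg (S x) (S v) x₀ b := by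
      have := congrFun hc b
      have hxb : x + b • v = a • x + b • y := by
        have ha' : a = 1 - b := by linarith
        rw [ha', hvdef, smul_sub, sub_smul, one_smul]
        abel
      rw [hxb] at this
      exact this
    have h := hsc.2 (Set.mem_univ (0:ℝ)) (Set.mem_univ (1:ℝ)) (by norm_num) ha hb hab
    simp only [smul_eq_mul, mul_zero, mul_one, zero_add] at h
    rw [e0, e1, eb]
    exact h
end

section
/- Let Z ∈ ℝ^{n×d}, let L̃ : ℝ^n → ℝ be C¹, define L(w) = L̃(Zw), let R : ℝ^d → ℝ be C² strictly convex with positive-definite Hessian, and let w : [0, ∞) → ℝ^d solve the mirror flow d/dt ∇R(w(t)) = −∇L(w(t)) with w(0) = w₀. Then for every t ≥ 0, ∇R(w(t)) − ∇R(w₀) lies in the row space of Z (i.e., in range(Zᵀ)). -/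
open Matrix
open scoped RealInnerProductSpace

/-- For a loss `L(w) = L̃(Zw)` and a mirror flow `d/dt ∇R(w(t)) = −∇L(w(t))`, the dual
iterate displacement `∇R(w(t)) − ∇R(w₀)` stays in the row space of `Z`, i.e. in `range Zᵀ`. -/
theorem stmt19 {n d : ℕ} (Z : Matrix (Fin n) (Fin d) ℝ)
    (Ltil : EuclideanSpace ℝ (Fin n) → ℝ) (hLtil : ContDiff ℝ 1 Ltil)
    (L : EuclideanSpace ℝ (Fin d) → ℝ)
    (hL : ∀ w : EuclideanSpace ℝ (Fin d), L w = Ltil (WithLp.toLp 2 (Z.mulVec w)))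
    (R : EuclideanSpace ℝ (Fin d) → ℝ)
    (hR : ContDiff ℝ 2 R) (hRconv : StrictConvexOn ℝ Set.univ R)
    (hRpd : ∀ w v : EuclideanSpace ℝ (Fin d), v ≠ 0 → 0 < ⟪fderiv ℝ (gradient R) w v, v⟫)
    (w : ℝ → EuclideanSpace ℝ (Fin d)) (w₀ : EuclideanSpace ℝ (Fin d)) (hw0 : w 0 = w₀)
    (hflow : ∀ t : ℝ, 0 ≤ t →
      HasDerivWithinAt (fun s => gradient R (w s)) (-gradient L (w t)) (Set.Ici (0 : ℝ)) t) :
    ∀ t : ℝ, 0 ≤ t →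
      ∃ c : Fin n → ℝ, gradient R (w t) - gradient R w₀ = Zᵀ.mulVec c := by
  classical
  intro t ht
  -- the linear map `c ↦ Zᵀ c` into Euclidean space
  let T : (Fin n → ℝ) →ₗ[ℝ] EuclideanSpace ℝ (Fin d) :=
    { toFun := fun c => WithLp.toLp 2 (Zᵀ.mulVec c)
      map_add' := fun x y => by simp [Matrix.mulVec_add]
      map_smul' := fun r x => by simp [Matrix.mulVec_smul] }
  let S : Submodule ℝ (EuclideanSpace ℝ (Fin d)) := LinearMap.range T
  -- vectors orthogonal to the row space are in the kernel of `Z`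
  have hker : ∀ v : EuclideanSpace ℝ (Fin d), v ∈ Sᗮ → Z.mulVec v = 0 := by
    intro v hv
    funext i
    have h : ⟪T (Pi.single i 1), v⟫ = 0 := hv (T (Pi.single i 1)) ⟨Pi.single i 1, rfl⟩
    have key : ⟪(show EuclideanSpace ℝ (Fin d) from WithLp.toLp 2 (Zᵀ.mulVec (Pi.single i 1))), v⟫
        = Z.mulVec v i := by
      simp [PiLp.inner_apply, RCLike.inner_apply, Matrix.mulVec, dotProduct,
        Pi.single_apply, mul_comm]
    have hTv : (T (Pi.single i 1) : EuclideanSpace ℝ (Fin d))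
        = (show EuclideanSpace ℝ (Fin d) from WithLp.toLp 2 (Zᵀ.mulVec (Pi.single i 1))) := rfl
    rw [hTv, key] at h
    simpa using h
  -- the continuous linear map `v ↦ Z v`
  let Aₗ : EuclideanSpace ℝ (Fin d) →ₗ[ℝ] EuclideanSpace ℝ (Fin n) :=
    { toFun := fun v => WithLp.toLp 2 (Z.mulVec v)
      map_add' := fun x y => by simp [Matrix.mulVec_add]
      map_smul' := fun r x => by simp [Matrix.mulVec_smul] }
  let A : EuclideanSpace ℝ (Fin d) →L[ℝ] EuclideanSpace ℝ (Fin n) :=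
    LinearMap.toContinuousLinearMap Aₗ
  have hLA : L = fun x => Ltil (A x) := funext fun x => hL x
  -- the gradient of `L` is orthogonal to kernel vectors of `Z`
  have hgradL : ∀ x v : EuclideanSpace ℝ (Fin d), Z.mulVec v = 0 →
      ⟪gradient L x, v⟫ = 0 := by
    intro x v hv
    have hd : HasFDerivAt L ((fderiv ℝ Ltil (A x)).comp A) x := by
      rw [hLA]
      exact ((hLtil.differentiable one_ne_zero (A x)).hasFDerivAt).comp x A.hasFDerivAt
    have h1 : ⟪gradient L x, v⟫ = fderiv ℝ L x v := by
      rw [gradient, InnerProductSpace.toDual_symm_apply]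
    have hAv : A v = 0 := by show WithLp.toLp 2 (Z.mulVec v) = 0; rw [hv]; rfl
    rw [h1, hd.fderiv]
    simp [ContinuousLinearMap.comp_apply, hAv]
  -- the dual displacement is orthogonal to `Sᗮ`
  have hmem : gradient R (w t) - gradient R (w 0) ∈ Sᗮᗮ := by
    rw [Submodule.mem_orthogonal]
    intro v hv
    have key : ∀ s ∈ Set.Ico (0:ℝ) t,
        HasDerivWithinAt (fun s => ⟪v, gradient R (w s)⟫) 0 (Set.Ici s) s := by
      intro s hs
      have hf := (hflow s hs.1).mono (Set.Ici_subset_Ici.2 hs.1)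
      have hcomp := (innerSL ℝ v).hasFDerivAt.comp_hasDerivWithinAt s hf
      have hz : (innerSL ℝ v) (-gradient L (w s)) = 0 := by
        show ⟪v, -gradient L (w s)⟫ = 0
        rw [inner_neg_right, real_inner_comm, hgradL _ _ (hker v hv), neg_zero]
      rw [hz] at hcomp; exact hcomp
    have hcont : ContinuousOn (fun s => ⟪v, gradient R (w s)⟫) (Set.Icc 0 t) := by
      intro s hs
      have hcomp := (innerSL ℝ v).hasFDerivAt.comp_hasDerivWithinAt s (hflow s hs.1)
      exact hcomp.continuousWithinAt.mono Set.Icc_subset_Ici_self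
    have hconst := constant_of_has_deriv_right_zero hcont key t (Set.right_mem_Icc.2 ht)
    have : ⟪v, gradient R (w t) - gradient R (w 0)⟫ = 0 := by
      rw [inner_sub_right, hconst, sub_self]
    exact this
  rw [Submodule.orthogonal_orthogonal] at hmem
  obtain ⟨c, hc⟩ := hmem
  exact ⟨c, by rw [← hw0]; exact congrArg WithLp.ofLp hc.symm⟩
end
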